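/- arXiv:2305.01327 — 2 statements merged into one kernel-verified Lean document; each statement's English description precedes it below -/
import Mathlib

section
/- Let f : 𝔹^n → 𝔹^n have non-autoregulated variable n with reduction f̃. Then the number of attractors of the asynchronous dynamics of f̃ is greater than or equal to the number of attractors of the asynchronous dynamics of f; concretely, the map sending each attractor 𝒜 of f to the set of attractors of f̃ contained in π(𝒜) assigns to distinct attractors of f disjoint nonempty sets of attractors of f̃. -/
/-- Asynchronous transition: flip one coordinate i where f disagrees with x. -/
def step {n : ℕ} (f : (Fin n → Bool) → Fin n → Bool) (x y : Fin n → Bool) : Prop :=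
  ∃ i : Fin n, f x i ≠ x i ∧ y = Function.update x i (!x i)

/-- Reachability: reflexive-transitive closure of the asynchronous step relation. -/
def reaches {n : ℕ} (f : (Fin n → Bool) → Fin n → Bool) :
    (Fin n → Bool) → (Fin n → Bool) → Prop :=
  Relation.ReflTransGen (step f)

/-- Trap set: no outgoing asynchronous transition. -/
def IsTrap {n : ℕ} (f : (Fin n → Bool) → Fin n → Bool) (B : Set (Fin n → Bool)) : Prop :=
  ∀ x ∈ B, ∀ y, step f x y → y ∈ B

/-- Attractor: inclusion-minimal nonempty trap set. -/
def IsAttractor {n : ℕ} (f : (Fin n → Bool) → Fin n → Bool) (A : Set (Fin n → Bool)) : Prop :=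
  A.Nonempty ∧ IsTrap f A ∧ ∀ B ⊆ A, B.Nonempty → IsTrap f B → B = A

/-- Subspace: the set of states fixing some coordinates to given constants. -/
def IsSubspace {n : ℕ} (T : Set (Fin n → Bool)) : Prop :=
  ∃ (I : Set (Fin n)) (v : Fin n → Bool), T = {x | ∀ i ∈ I, x i = v i}

/-- Trap space: a subspace that is a trap set. -/
def IsTrapSpace {n : ℕ} (f : (Fin n → Bool) → Fin n → Bool) (T : Set (Fin n → Bool)) : Prop :=
  IsSubspace T ∧ IsTrap f T

/-- Minimal trap space: nonempty trap space minimal under inclusion. -/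
def IsMinTrapSpace {n : ℕ} (f : (Fin n → Bool) → Fin n → Bool) (T : Set (Fin n → Bool)) : Prop :=
  T.Nonempty ∧ IsTrapSpace f T ∧
    ∀ T' ⊆ T, T'.Nonempty → IsTrapSpace f T' → T' = T

/-- The lifting map 𝒮(x) = (x, f_n(x,0)). -/
def liftS {n : ℕ} (f : (Fin (n+1) → Bool) → Fin (n+1) → Bool) (x : Fin n → Bool) :
    Fin (n+1) → Bool :=
  Fin.snoc x (f (Fin.snoc x false) (Fin.last n))

/-- Reduction by elimination of the (non-autoregulated) last variable:
f̃_i(x) = f_i(𝒮(x)). -/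
def reduced {n : ℕ} (f : (Fin (n+1) → Bool) → Fin (n+1) → Bool)
    (x : Fin n → Bool) (i : Fin n) : Bool :=
  f (liftS f x) i.castSucc

/-- Projection π onto the first n coordinates. -/
def proj {n : ℕ} (y : Fin (n+1) → Bool) : Fin n → Bool := Fin.init y

/-!
A trap set `A` of `f` is closed under resetting the last coordinate to its (constant) target
value, so it contains `liftS f x` whenever it contains some `(x, a)`. A transition of `f̃` from
`x` to `y` is the transition of `f` from `liftS f x` on the same coordinate followed by this
reset, hence `π(A)` is a trap set of `f̃` and contains an attractor of `f̃`. Conversely every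
state `x` of `π(A)` satisfies `liftS f x ∈ A`, so a common state of `π(A)` and `π(B)` gives a
common state of two attractors `A`, `B` of `f`, forcing `A = B`.
-/

section Attractor

variable {n : ℕ} {f : (Fin n → Bool) → Fin n → Bool}

lemma IsTrap.inter {A B : Set (Fin n → Bool)} (hA : IsTrap f A) (hB : IsTrap f B) :
    IsTrap f (A ∩ B) :=
  fun x hx y hxy => ⟨hA x hx.1 y hxy, hB x hx.2 y hxy⟩

lemma IsAttractor.eq_of_mem_of_mem {A B : Set (Fin n → Bool)} (hA : IsAttractor f A)
    (hB : IsAttractor f B) {x : Fin n → Bool} (hxA : x ∈ A) (hxB : x ∈ B) : A = B := by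
  have hne : (A ∩ B).Nonempty := ⟨x, hxA, hxB⟩
  have htrap : IsTrap f (A ∩ B) := hA.2.1.inter hB.2.1
  rw [← hA.2.2 _ Set.inter_subset_left hne htrap, hB.2.2 _ Set.inter_subset_right hne htrap]

lemma IsTrap.exists_isAttractor_subset {B : Set (Fin n → Bool)} (hT : IsTrap f B)
    (hB : B.Nonempty) : ∃ A ⊆ B, IsAttractor f A := by
  obtain ⟨C, ⟨hCB, hC, hCT⟩, hmin⟩ := exists_minimal_of_wellFoundedLT
    (fun C => C ⊆ B ∧ C.Nonempty ∧ IsTrap f C) ⟨B, subset_rfl, hB, hT⟩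
  exact ⟨C, hCB, hC, hCT, fun D hDC hD hDT =>
    hDC.antisymm (hmin ⟨hDC.trans hCB, hD, hDT⟩ hDC)⟩

end Attractor

lemma Set.ncard_le_ncard_of_pairwiseDisjoint {α β : Type*} {s : Set α} {t : Set β}
    (F : α → Set β) (hF : ∀ a ∈ s, (F a).Nonempty ∧ F a ⊆ t) (hdisj : s.PairwiseDisjoint F)
    (ht : t.Finite) : s.ncard ≤ t.ncard := by
  classical
  rcases s.eq_empty_or_nonempty with rfl | ⟨a₀, ha₀⟩
  · simp
  have : Nonempty β := ⟨(hF a₀ ha₀).1.some⟩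
  let g : α → β := fun a => if h : (F a).Nonempty then h.some else Classical.arbitrary β
  have hg : ∀ a ∈ s, g a ∈ F a := fun a h => by
    simp only [g, dif_pos (hF a h).1]; exact (hF a h).1.some_mem
  refine Set.ncard_le_ncard_of_injOn g (fun a h => (hF a h).2 (hg a h)) ?_ ht
  intro a ha b hb hab
  by_contra hne
  exact Set.disjoint_left.mp (hdisj ha hb hne) (hg a ha) (hab ▸ hg b hb)

def IsNonAutoregulated {n : ℕ} (f : (Fin (n+1) → Bool) → Fin (n+1) → Bool) : Prop :=
  ∀ (x : Fin n → Bool) (a b : Bool), f (Fin.snoc x a) (Fin.last n) = f (Fin.snoc x b) (Fin.last n)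

def reducedAttractorsIn {n : ℕ} (f : (Fin (n+1) → Bool) → Fin (n+1) → Bool)
    (A : Set (Fin (n+1) → Bool)) : Set (Set (Fin n → Bool)) :=
  {A' | IsAttractor (reduced f) A' ∧ A' ⊆ proj '' A}

section Reduction

variable {n : ℕ} {f : (Fin (n+1) → Bool) → Fin (n+1) → Bool} {A : Set (Fin (n+1) → Bool)}

lemma proj_liftS (x : Fin n → Bool) : proj (liftS f x) = x := Fin.init_snoc _ _

lemma IsTrap.liftS_mem_of_snoc_mem (hf : IsNonAutoregulated f) (hA : IsTrap f A)
    {x : Fin n → Bool} {a : Bool} (h : Fin.snoc x a ∈ A) : liftS f x ∈ A := by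
  by_cases ha : a = f (Fin.snoc x false) (Fin.last n)
  · rwa [liftS, ← ha]
  · refine hA _ h _ ⟨Fin.last n, ?_, ?_⟩
    · rw [hf x a false, Fin.snoc_last]; exact Ne.symm ha
    · rw [Fin.snoc_last, Fin.update_snoc_last, liftS, Bool.eq_not_of_ne ha, Bool.not_not]

lemma IsTrap.liftS_mem_of_mem_image_proj (hf : IsNonAutoregulated f) (hA : IsTrap f A)
    {x : Fin n → Bool} (hx : x ∈ proj '' A) : liftS f x ∈ A := by
  obtain ⟨z, hz, rfl⟩ := hx
  exact hA.liftS_mem_of_snoc_mem hf (a := z (Fin.last n)) (by rwa [proj, Fin.snoc_init_self])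

lemma step_liftS_of_step_reduced {x y : Fin n → Bool} (hxy : step (reduced f) x y) :
    step f (liftS f x) (Fin.snoc y (f (Fin.snoc x false) (Fin.last n))) := by
  obtain ⟨i, hi, rfl⟩ := hxy
  refine ⟨i.castSucc, ?_, ?_⟩
  · rwa [liftS, Fin.snoc_castSucc]
  · rw [liftS, Fin.snoc_castSucc, Fin.snoc_update]

lemma IsTrap.image_proj (hf : IsNonAutoregulated f) (hA : IsTrap f A) :
    IsTrap (reduced f) (proj '' A) := by
  intro x hx y hxy
  have hlift : liftS f x ∈ A := hA.liftS_mem_of_mem_image_proj hf hx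
  have hy : liftS f y ∈ A :=
    hA.liftS_mem_of_snoc_mem hf (hA _ hlift _ (step_liftS_of_step_reduced hxy))
  exact ⟨liftS f y, hy, proj_liftS y⟩

lemma IsAttractor.reducedAttractorsIn_nonempty (hf : IsNonAutoregulated f)
    (hA : IsAttractor f A) : (reducedAttractorsIn f A).Nonempty := by
  obtain ⟨A', hA'A, hA'⟩ := (hA.2.1.image_proj hf).exists_isAttractor_subset (hA.1.image proj)
  exact ⟨A', hA', hA'A⟩

lemma disjoint_reducedAttractorsIn (hf : IsNonAutoregulated f) {B : Set (Fin (n+1) → Bool)}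
    (hA : IsAttractor f A) (hB : IsAttractor f B) (hAB : A ≠ B) :
    Disjoint (reducedAttractorsIn f A) (reducedAttractorsIn f B) := by
  rw [Set.disjoint_left]
  rintro A' ⟨hA', hA'A⟩ ⟨-, hA'B⟩
  obtain ⟨x, hx⟩ := hA'.1
  exact hAB (hA.eq_of_mem_of_mem hB (hA.2.1.liftS_mem_of_mem_image_proj hf (hA'A hx))
    (hB.2.1.liftS_mem_of_mem_image_proj hf (hA'B hx)))

end Reduction

theorem stmt7 {n : ℕ} (f : (Fin (n+1) → Bool) → Fin (n+1) → Bool)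
    (hna : ∀ (x : Fin n → Bool) (a b : Bool),
      f (Fin.snoc x a) (Fin.last n) = f (Fin.snoc x b) (Fin.last n)) :
    {A | IsAttractor f A}.ncard ≤ {A | IsAttractor (reduced f) A}.ncard ∧
    ∀ A B : Set (Fin (n+1) → Bool), IsAttractor f A → IsAttractor f B → A ≠ B →
      {A' | IsAttractor (reduced f) A' ∧ A' ⊆ proj '' A}.Nonempty ∧
      Disjoint {A' | IsAttractor (reduced f) A' ∧ A' ⊆ proj '' A}
        {A' | IsAttractor (reduced f) A' ∧ A' ⊆ proj '' B} := by
  refine ⟨?_, fun A B hA hB hAB =>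
    ⟨hA.reducedAttractorsIn_nonempty hna, disjoint_reducedAttractorsIn hna hA hB hAB⟩⟩
  exact Set.ncard_le_ncard_of_pairwiseDisjoint (reducedAttractorsIn f)
    (fun A hA => ⟨IsAttractor.reducedAttractorsIn_nonempty hna hA, fun _ h => h.1⟩)
    (fun A hA B hB hAB => disjoint_reducedAttractorsIn hna hA hB hAB) (Set.toFinite _)
end

section
/- Projections of attractor states need not lie in attractors of the reduced network: for f̂(x₁,x₂,x₃) = (¬x₁¬x₂ ∨ ¬x₁¬x₃ ∨ x₂¬x₃, x₁¬x₂¬x₃ ∨ ¬x₁¬x₂x₃, x₁¬x₂ ∨ ¬x₁x₂), the state 011 lies in the unique attractor of the asynchronous dynamics of f̂, but its projection 01 onto the first two coordinates does not belong to any attractor of the reduction of f̂ obtained by eliminating the non-autoregulated variable x₃, which is f(x₁,x₂) = (x₁x₂ ∨ ¬x₁¬x₂, 0). -/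
/-- f̂(x₁,x₂,x₃) = (¬x₁¬x₂ ∨ ¬x₁¬x₃ ∨ x₂¬x₃, x₁¬x₂¬x₃ ∨ ¬x₁¬x₂x₃, x₁¬x₂ ∨ ¬x₁x₂). -/
def fhat (x : Fin 3 → Bool) : Fin 3 → Bool :=
  ![(!x 0 && !x 1) || (!x 0 && !x 2) || (x 1 && !x 2),
    (x 0 && !x 1 && !x 2) || (!x 0 && !x 1 && x 2),
    (x 0 && !x 1) || (!x 0 && x 1)]

/-- f(x₁,x₂) = (x₁x₂ ∨ ¬x₁¬x₂, 0), the reduction of f̂ by elimination of x₃. -/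
def f18 (x : Fin 2 → Bool) : Fin 2 → Bool :=
  ![(x 0 && x 1) || (!x 0 && !x 1), false]

/-!
If every state reaches a state `a`, the states reachable from `a` form the unique attractor, since an
attractor is the set of states reachable from any of its points. For `f̂` every state reaches `000`,
and `000 → 100 → 101 → 001 → 011`. For `f` the coordinate `x₂` is constantly `0`, so `{x | x₂ = 0}`
is a trap set. It contains `00`, a successor of `01`, hence every attractor through `01`, yet not `01` itself.
-/

section Dynamics

variable {n : ℕ} {f : (Fin n → Bool) → Fin n → Bool}

instance : DecidableRel (step f) :=
  fun x y => inferInstanceAs (Decidable (∃ i, f x i ≠ x i ∧ y = Function.update x i (!x i)))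

theorem IsTrap.mem_of_reaches {B : Set (Fin n → Bool)} (hB : IsTrap f B) {x y : Fin n → Bool}
    (hx : x ∈ B) (h : reaches f x y) : y ∈ B := by
  induction h with
  | refl => exact hx
  | tail _ hstep ih => exact hB _ ih _ hstep

theorem isTrap_setOf_reaches (a : Fin n → Bool) : IsTrap f {y | reaches f a y} :=
  fun _ hx _ hstep => Relation.ReflTransGen.tail hx hstep

theorem isTrap_setOf_apply_eq {i : Fin n} {b : Bool} (h : ∀ x, x i = b → f x i = b) :
    IsTrap f {x | x i = b} := by
  rintro x hx _ ⟨j, hj, rfl⟩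
  have hji : j ≠ i := by
    rintro rfl
    exact hj ((h x hx).trans hx.symm)
  simpa [Function.update_of_ne hji.symm] using hx

theorem IsAttractor.eq_setOf_reaches {A : Set (Fin n → Bool)} (hA : IsAttractor f A)
    {a : Fin n → Bool} (ha : a ∈ A) : A = {y | reaches f a y} :=
  (hA.2.2 _ (fun _ hy => hA.2.1.mem_of_reaches ha hy) ⟨a, .refl⟩ (isTrap_setOf_reaches a)).symm

theorem IsAttractor.subset_of_isTrap {A T : Set (Fin n → Bool)} (hA : IsAttractor f A)
    (hT : IsTrap f T) {a : Fin n → Bool} (haA : a ∈ A) (haT : a ∈ T) : A ⊆ T := by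
  rw [hA.eq_setOf_reaches haA]
  exact fun _ hy => hT.mem_of_reaches haT hy

variable {a : Fin n → Bool}

theorem isAttractor_setOf_reaches (h : ∀ x, reaches f x a) :
    IsAttractor f {y | reaches f a y} := by
  refine ⟨⟨a, .refl⟩, isTrap_setOf_reaches a, fun B hBA ⟨b, hb⟩ hB => ?_⟩
  have haB : a ∈ B := hB.mem_of_reaches hb (h b)
  exact hBA.antisymm fun _ hy => hB.mem_of_reaches haB hy

theorem IsAttractor.eq_setOf_reaches_of_forall (h : ∀ x, reaches f x a) {A : Set (Fin n → Bool)}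
    (hA : IsAttractor f A) : A = {y | reaches f a y} :=
  let ⟨b, hb⟩ := hA.1
  hA.eq_setOf_reaches (hA.2.1.mem_of_reaches hb (h b))

end Dynamics

theorem reduced_fhat : reduced fhat = f18 := by
  funext x i
  revert x i
  decide

theorem fhat_reaches_000 (x : Fin 3 → Bool) : reaches fhat x ![false, false, false] := by
  have h001 : reaches fhat ![false, false, true] ![false, false, false] := .single (by decide)
  have h100 : reaches fhat ![true, false, false] ![false, false, false] := .single (by decide)
  have h011 : reaches fhat ![false, true, true] ![false, false, false] := .head (by decide) h001
  have hcases : ∀ x : Fin 3 → Bool, x = ![false, false, false] ∨ x = ![false, false, true] ∨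
      x = ![false, true, false] ∨ x = ![false, true, true] ∨ x = ![true, false, false] ∨
      x = ![true, false, true] ∨ x = ![true, true, false] ∨ x = ![true, true, true] := by
    decide
  rcases hcases x with rfl | rfl | rfl | rfl | rfl | rfl | rfl | rfl
  · exact .refl
  · exact h001
  · exact .single (by decide)
  · exact h011
  · exact h100
  · exact .head (by decide) h001
  · exact .head (by decide) h100
  · exact .head (by decide) h011

theorem fhat_000_reaches_011 : reaches fhat ![false, false, false] ![false, true, true] :=
  .head (b := ![true, false, false]) (by decide) <|
    .head (b := ![true, false, true]) (by decide) <|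
      .head (b := ![false, false, true]) (by decide) <| .single (by decide)

theorem notMem_of_isAttractor_f18 {A : Set (Fin 2 → Bool)} (hA : IsAttractor f18 A) :
    ![false, true] ∉ A := by
  intro h01
  have h00 : ![false, false] ∈ A := hA.2.1 _ h01 _ (by decide)
  have hT : IsTrap f18 {x | x 1 = false} := isTrap_setOf_apply_eq fun _ _ => rfl
  exact absurd (hA.subset_of_isTrap hT h00 rfl h01) (by decide)

theorem stmt18 :
    (∀ (x : Fin 2 → Bool) (i : Fin 2), reduced fhat x i = f18 x i) ∧
    (∃ A, IsAttractor fhat A ∧ (∀ B, IsAttractor fhat B → B = A) ∧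
      (![false, true, true] : Fin 3 → Bool) ∈ A) ∧
    (∀ A, IsAttractor f18 A → (![false, true] : Fin 2 → Bool) ∉ A) :=
  ⟨fun x i => congrFun (congrFun reduced_fhat x) i,
    ⟨_, isAttractor_setOf_reaches fhat_reaches_000,
      fun _ hB => hB.eq_setOf_reaches_of_forall fhat_reaches_000, fhat_000_reaches_011⟩,
    fun _ => notMem_of_isAttractor_f18⟩
end
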